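/- Dihedral angle determination: given four points A, B, C, D in ℝ³ with A, B, C and A, B, D each affinely independent, the six pairwise distances determine the dihedral angle along edge AB; conversely, if the five distances |AB|, |AC|, |BC|, |AD|, |BD| are fixed, then |CD| is a continuous, strictly monotone function of the dihedral angle along AB on [0, π]. -/
import Mathlib


noncomputable section
open scoped RealInnerProductSpace
local notation "E3" => EuclideanSpace ℝ (Fin 3)

/-- The component of `X - A` orthogonal to the line through `A` and `B`. -/
def perpComp (A B X : EuclideanSpace ℝ (Fin 3)) : EuclideanSpace ℝ (Fin 3) :=
  (X - A) - (⟪X - A, B - A⟫ / ⟪B - A, B - A⟫) • (B - A)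

/-- The dihedral angle along edge `AB` between the half-planes through `C` and
through `D`: the angle between the components of `C - A` and `D - A`
orthogonal to the line `AB`. -/
def dihedral (A B C D : EuclideanSpace ℝ (Fin 3)) : ℝ :=
  InnerProductGeometry.angle (perpComp A B C) (perpComp A B D)

lemma perp_inner_zero (A B X : E3) (h : A ≠ B) : ⟪perpComp A B X, B - A⟫ = 0 := by
  have hu' : ⟪B - A, B - A⟫ ≠ 0 := inner_self_ne_zero.2 (sub_ne_zero_of_ne h.symm)
  rw [perpComp, inner_sub_left, real_inner_smul_left, div_mul_cancel₀ _ hu', sub_self]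

lemma sVal_eq (A B X : E3) :
    ⟪X - A, B - A⟫ = (dist A X ^ 2 + dist A B ^ 2 - dist B X ^ 2) / 2 := by
  have h1 : dist B X ^ 2 = ‖X - A‖ ^ 2 - 2 * ⟪X - A, B - A⟫ + ‖B - A‖ ^ 2 := by
    rw [← @norm_sub_sq_real, sub_sub_sub_cancel_right, dist_eq_norm, norm_sub_rev]
  have h2 : dist A X ^ 2 = ‖X - A‖ ^ 2 := by rw [dist_eq_norm, norm_sub_rev]
  have h3 : dist A B ^ 2 = ‖B - A‖ ^ 2 := by rw [dist_eq_norm, norm_sub_rev]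
  linarith

lemma perp_norm_sq (A B X : E3) (h : A ≠ B) :
    ‖perpComp A B X‖ ^ 2 = dist A X ^ 2 - ⟪X - A, B - A⟫ ^ 2 / dist A B ^ 2 := by
  have hn : ‖B - A‖ ≠ 0 := norm_ne_zero_iff.2 (sub_ne_zero_of_ne h.symm)
  have key : ∀ s n X2 : ℝ, n ≠ 0 → X2 - 2 * (s / n * s) + (s / n) ^ 2 * n = X2 - s ^ 2 / n := by
    intros s n X2 hn0; field_simp; ring
  have h2 : dist A X ^ 2 = ‖X - A‖ ^ 2 := by rw [dist_eq_norm, norm_sub_rev]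
  have h3 : dist A B ^ 2 = ‖B - A‖ ^ 2 := by rw [dist_eq_norm, norm_sub_rev]
  rw [h2, h3, perpComp, @norm_sub_sq_real, real_inner_smul_right, norm_smul,
    real_inner_self_eq_norm_sq, mul_pow, Real.norm_eq_abs, sq_abs, div_pow]
  have hsq : ‖B - A‖ ^ 2 ≠ 0 := pow_ne_zero 2 hn
  have : ⟪X - A, B - A⟫ ^ 2 / (‖B - A‖ ^ 2) ^ 2 * ‖B - A‖ ^ 2
      = (⟪X - A, B - A⟫ / ‖B - A‖ ^ 2) ^ 2 * ‖B - A‖ ^ 2 := by rw [div_pow]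
  rw [this]
  exact key _ _ _ hsq

lemma cd_sq (A B C D : E3) (h : A ≠ B) :
    dist C D ^ 2 = ‖perpComp A B C‖ ^ 2 + ‖perpComp A B D‖ ^ 2
      + (⟪C - A, B - A⟫ - ⟪D - A, B - A⟫) ^ 2 / dist A B ^ 2
      - 2 * ‖perpComp A B C‖ * ‖perpComp A B D‖ * Real.cos (dihedral A B C D) := by
  have hn : ‖B - A‖ ≠ 0 := norm_ne_zero_iff.2 (sub_ne_zero_of_ne h.symm)
  have hi : ⟪B - A, B - A⟫ = ‖B - A‖ ^ 2 := real_inner_self_eq_norm_sq (B - A)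
  set p := perpComp A B C with hp
  set q := perpComp A B D with hq
  set s := ⟪C - A, B - A⟫ with hs
  set t := ⟪D - A, B - A⟫ with ht
  have hdecomp : C - D = (p - q) + ((s - t) / ‖B - A‖ ^ 2) • (B - A) := by
    rw [hp, hq, perpComp, perpComp, hi, sub_div, sub_smul]
    abel
  have hperp : ⟪p - q, ((s - t) / ‖B - A‖ ^ 2) • (B - A)⟫ = 0 := by
    rw [real_inner_smul_right, inner_sub_left, perp_inner_zero A B C h,
      perp_inner_zero A B D h]
    ring
  have h1 : dist C D ^ 2 = ‖p - q‖ ^ 2 + (s - t) ^ 2 / ‖B - A‖ ^ 2 := by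
    rw [dist_eq_norm, hdecomp, @norm_add_sq_real, hperp, norm_smul, mul_pow,
      Real.norm_eq_abs, sq_abs, div_pow]
    have : ((s - t) ^ 2 / (‖B - A‖ ^ 2) ^ 2) * ‖B - A‖ ^ 2 = (s - t) ^ 2 / ‖B - A‖ ^ 2 := by
      field_simp
    rw [this]; ring
  have h2 : ‖p - q‖ ^ 2 = ‖p‖ ^ 2 + ‖q‖ ^ 2 - 2 * (Real.cos (dihedral A B C D) * (‖p‖ * ‖q‖)) := by
    rw [dihedral, InnerProductGeometry.cos_angle_mul_norm_mul_norm, @norm_sub_sq_real]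
    ring
  have h3 : dist A B ^ 2 = ‖B - A‖ ^ 2 := by rw [dist_eq_norm, norm_sub_rev]
  rw [h1, h2, h3]; ring

lemma perp_ne_zero (A B X : E3) (h : AffineIndependent ℝ ![A, B, X]) :
    A ≠ B ∧ perpComp A B X ≠ 0 := by
  have hcol := affineIndependent_iff_not_collinear_set.1 h
  have hAB : A ≠ B := by
    intro e
    have h01 : (0 : Fin 3) = 1 := h.injective (show ![A,B,X] 0 = ![A,B,X] 1 by simp [e])
    exact absurd h01 (by decide)
  refine ⟨hAB, fun hp => hcol ?_⟩
  have hr : X - A = (⟪X - A, B - A⟫ / ⟪B - A, B - A⟫) • (B - A) := by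
    have : X - A - (⟪X - A, B - A⟫ / ⟪B - A, B - A⟫) • (B - A) = 0 := hp
    exact sub_eq_zero.1 this
  have hX : (⟪X - A, B - A⟫ / ⟪B - A, B - A⟫) • (B - A) + A = X := by
    rw [← hr]; abel
  apply collinear_iff_of_mem (Set.mem_insert A {B, X}) |>.2
  refine ⟨B - A, fun p hp => ?_⟩
  rcases hp with rfl | rfl | rfl
  · exact ⟨0, by simp⟩
  · exact ⟨1, by simp⟩
  · exact ⟨_, by simp only [vadd_eq_add]; exact hX.symm⟩

/-- The six pairwise distances determine the dihedral angle along `AB`;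
conversely, once the five distances `|AB|, |AC|, |BC|, |AD|, |BD|` are fixed,
`|CD|` is a continuous strictly monotone function of the dihedral angle
along `AB` on `[0, π]`. -/
theorem stmt_9
    (A B C D : E3)
    (hABC : AffineIndependent ℝ ![A, B, C])
    (hABD : AffineIndependent ℝ ![A, B, D]) :
    -- six pairwise distances determine the dihedral angle:
    (∀ A' B' C' D' : E3,
      dist A' B' = dist A B → dist A' C' = dist A C → dist B' C' = dist B C →
      dist A' D' = dist A D → dist B' D' = dist B D → dist C' D' = dist C D →
      dihedral A' B' C' D' = dihedral A B C D) ∧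
    -- with only the five distances fixed, |CD| is a continuous strictly
    -- monotone function of the dihedral angle on [0, π]:
    (∃ f : ℝ → ℝ, ContinuousOn f (Set.Icc 0 Real.pi) ∧
      StrictMonoOn f (Set.Icc 0 Real.pi) ∧
      ∀ A' B' C' D' : E3,
        dist A' B' = dist A B → dist A' C' = dist A C → dist B' C' = dist B C →
        dist A' D' = dist A D → dist B' D' = dist B D →
        dist C' D' = f (dihedral A' B' C' D')) := by
  obtain ⟨hAB, hpC⟩ := perp_ne_zero A B C hABC
  obtain ⟨_, hpD⟩ := perp_ne_zero A B D hABD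
  set P := ‖perpComp A B C‖ with hPdef
  set Q := ‖perpComp A B D‖ with hQdef
  set M := ((dist A C ^ 2 + dist A B ^ 2 - dist B C ^ 2) / 2
      - (dist A D ^ 2 + dist A B ^ 2 - dist B D ^ 2) / 2) ^ 2 / dist A B ^ 2 with hMdef
  have hP : 0 < P := norm_pos_iff.2 hpC
  have hQ : 0 < Q := norm_pos_iff.2 hpD
  have hM : 0 ≤ M := by positivity
  set f : ℝ → ℝ := fun x => Real.sqrt (P ^ 2 + Q ^ 2 + M - 2 * P * Q * Real.cos x) with hfdef
  -- key: five distances force dist C' D' = f (dihedral ...)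
  have key : ∀ A' B' C' D' : E3,
      dist A' B' = dist A B → dist A' C' = dist A C → dist B' C' = dist B C →
      dist A' D' = dist A D → dist B' D' = dist B D →
      dist C' D' = f (dihedral A' B' C' D') := by
    intro A' B' C' D' d1 d2 d3 d4 d5
    have hAB' : A' ≠ B' := by
      intro e
      rw [e, dist_self] at d1
      exact hAB (dist_eq_zero.1 d1.symm)
    have eC : ‖perpComp A' B' C'‖ = P := by
      have e1 : ‖perpComp A' B' C'‖ ^ 2 = P ^ 2 := by
        rw [hPdef, perp_norm_sq _ _ _ hAB', perp_norm_sq _ _ _ hAB, sVal_eq, sVal_eq,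
          d1, d2, d3]
      have := congrArg Real.sqrt e1
      rwa [Real.sqrt_sq (norm_nonneg _), Real.sqrt_sq (norm_nonneg _)] at this
    have eD : ‖perpComp A' B' D'‖ = Q := by
      have e1 : ‖perpComp A' B' D'‖ ^ 2 = Q ^ 2 := by
        rw [hQdef, perp_norm_sq _ _ _ hAB', perp_norm_sq _ _ _ hAB, sVal_eq, sVal_eq,
          d1, d4, d5]
      have := congrArg Real.sqrt e1
      rwa [Real.sqrt_sq (norm_nonneg _), Real.sqrt_sq (norm_nonneg _)] at this
    have e3 : dist C' D' ^ 2
        = P ^ 2 + Q ^ 2 + M - 2 * P * Q * Real.cos (dihedral A' B' C' D') := by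
      rw [cd_sq _ _ _ _ hAB', eC, eD, sVal_eq, sVal_eq, d1, d2, d3, d4, d5, hMdef]
    have := congrArg Real.sqrt e3
    rwa [Real.sqrt_sq dist_nonneg] at this
  have fmono : StrictMonoOn f (Set.Icc 0 Real.pi) := by
    intro x hx y hy hxy
    have hcos : Real.cos y < Real.cos x := Real.strictAntiOn_cos hx hy hxy
    have hx1 : Real.cos x ≤ 1 := Real.cos_le_one x
    have hPQ : 0 < P * Q := mul_pos hP hQ
    have hnn : 0 ≤ P ^ 2 + Q ^ 2 + M - 2 * P * Q * Real.cos x := by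
      nlinarith [sq_nonneg (P - Q), mul_le_of_le_one_right hPQ.le hx1]
    exact Real.sqrt_lt_sqrt hnn (by nlinarith [mul_lt_mul_of_pos_left hcos hPQ])
  refine ⟨?_, f, ?_, fmono, key⟩
  · intro A' B' C' D' d1 d2 d3 d4 d5 d6
    have h1 : f (dihedral A' B' C' D') = f (dihedral A B C D) := by
      rw [← key A' B' C' D' d1 d2 d3 d4 d5, ← key A B C D rfl rfl rfl rfl rfl, d6]
    exact fmono.injOn ⟨InnerProductGeometry.angle_nonneg _ _, InnerProductGeometry.angle_le_pi _ _⟩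
      ⟨InnerProductGeometry.angle_nonneg _ _, InnerProductGeometry.angle_le_pi _ _⟩ h1
  · exact (Real.continuous_sqrt.comp (by continuity)).continuousOn
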